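/- Let Υ = ½(|01⟩⟨01| + |10⟩⟨10|) and Υ' = (H ⊗ H) Υ (H ⊗ H), where H = (1/√2)[[1,1],[1,−1]] is the Hadamard matrix. Then R(Υ'; σ₁, −σ₁) = 1 and R(Υ'; σ₃, −σ₃) = 0, while R(Υ; σ₃, −σ₃) = 1 and R(Υ; σ₁, −σ₁) = 0. Consequently neither of the information structures Υ and Υ' is better than the other: there is a game for which Υ yields a strictly higher value than Υ', and a game for which Υ' yields a strictly higher value than Υ. -/

import Mathlib

open Matrix Kronecker BigOperators
open scoped ComplexOrder

/-- A density operator: positive semidefinite with trace 1. -/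
def IsDensity {ι : Type} [Fintype ι] (A : Matrix ι ι ℂ) : Prop :=
  A.PosSemidef ∧ A.trace = 1

/-- A POVM with `k` outcomes: positive semidefinite operators summing to the identity. -/
def IsPOVM {ι : Type} [Fintype ι] [DecidableEq ι] {k : ℕ}
    (D : Fin k → Matrix ι ι ℂ) : Prop :=
  (∀ i, (D i).PosSemidef) ∧ ∑ i, D i = 1

/-- Reindexing that aligns the tensor factors N⊗S⊗A⊗B with (N⊗B)⊗(S⊗A). -/
def reord {n s a b : ℕ} :
    (Fin n × Fin s) × (Fin a × Fin b) → (Fin n × Fin b) × (Fin s × Fin a) :=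
  fun p => ((p.1.1, p.2.2), (p.1.2, p.2.1))

/-- The expected payoff `tr((Φ ⊗ ρ)·(M ⊗ D))`, with tensor factors reordered so that
`M` acts on `H_N ⊗ H_B` and `D` acts on `H_S ⊗ H_A`. -/
noncomputable def payoff {n s a b : ℕ}
    (Φ : Matrix (Fin n × Fin s) (Fin n × Fin s) ℂ)
    (ρ : Matrix (Fin a × Fin b) (Fin a × Fin b) ℂ)
    (M : Matrix (Fin n × Fin b) (Fin n × Fin b) ℂ)
    (D : Matrix (Fin s × Fin a) (Fin s × Fin a) ℂ) : ℝ :=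
  (((Φ ⊗ₖ ρ) * ((M ⊗ₖ D).submatrix reord reord)).trace).re

/-- The value of the game `(ρ, M^1, …, M^k)` over the information structure `Φ`:
the maximal expected payoff over all strategies (POVMs on `H_S ⊗ H_A`). -/
noncomputable def Rval {n s a b k : ℕ}
    (Φ : Matrix (Fin n × Fin s) (Fin n × Fin s) ℂ)
    (ρ : Matrix (Fin a × Fin b) (Fin a × Fin b) ℂ)
    (M : Fin k → Matrix (Fin n × Fin b) (Fin n × Fin b) ℂ) : ℝ :=
  sSup {r : ℝ | ∃ D : Fin k → Matrix (Fin s × Fin a) (Fin s × Fin a) ℂ,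
    IsPOVM D ∧ r = ∑ i, payoff Φ ρ (M i) (D i)}

/-- `Φ` is better than `Ψ`: in every game (environment `ρ_AB` together with Hermitian
payoff observables `M^1, …, M^k` on `H_N ⊗ H_B`) the value over `Φ` is at least the
value over `Ψ`. -/
def Better {n s t : ℕ}
    (Φ : Matrix (Fin n × Fin s) (Fin n × Fin s) ℂ)
    (Ψ : Matrix (Fin n × Fin t) (Fin n × Fin t) ℂ) : Prop :=
  ∀ (a b k : ℕ) (ρ : Matrix (Fin a × Fin b) (Fin a × Fin b) ℂ)
    (M : Fin k → Matrix (Fin n × Fin b) (Fin n × Fin b) ℂ),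
    IsDensity ρ → (∀ i, (M i).IsHermitian) →
      Rval Ψ ρ M ≤ Rval Φ ρ M



/-- Value of the trivial-environment game given by Hermitian payoff observables
`M^1, …, M^k` on `H_N`, over the information structure `Φ` on `H_N ⊗ H_S`:
the maximum over POVMs `(D^1, …, D^k)` on `H_S` of `Σ_i tr(Φ·(M^i ⊗ D^i))`. -/
noncomputable def RvalTriv {n s k : ℕ}
    (Φ : Matrix (Fin n × Fin s) (Fin n × Fin s) ℂ)
    (M : Fin k → Matrix (Fin n) (Fin n) ℂ) : ℝ :=
  sSup {r : ℝ | ∃ D : Fin k → Matrix (Fin s) (Fin s) ℂ,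
    IsPOVM D ∧ r = ∑ i, ((Φ * (M i ⊗ₖ D i)).trace).re}

noncomputable section

/-- The standard basis vector `|01⟩` of `ℂ² ⊗ ℂ²`. -/
def e01 : Fin 2 × Fin 2 → ℂ := fun p => if p = (0, 1) then 1 else 0

/-- The standard basis vector `|10⟩` of `ℂ² ⊗ ℂ²`. -/
def e10 : Fin 2 × Fin 2 → ℂ := fun p => if p = (1, 0) then 1 else 0

/-- The singlet state
`Φ = ½(|01⟩⟨01| − |10⟩⟨01| − |01⟩⟨10| + |10⟩⟨10|)`. -/
def singlet : Matrix (Fin 2 × Fin 2) (Fin 2 × Fin 2) ℂ :=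
  (1 / 2 : ℂ) •
    (vecMulVec e01 e01 - vecMulVec e10 e01 - vecMulVec e01 e10 + vecMulVec e10 e10)

/-- The classically correlated state `Υ = ½(|01⟩⟨01| + |10⟩⟨10|)`. -/
def upsilon : Matrix (Fin 2 × Fin 2) (Fin 2 × Fin 2) ℂ :=
  (1 / 2 : ℂ) • (vecMulVec e01 e01 + vecMulVec e10 e10)

/-- The Pauli matrices `σ_0, σ_1, σ_2, σ_3`. -/
def pauli : Fin 4 → Matrix (Fin 2) (Fin 2) ℂ :=
  ![!![1, 0; 0, 1], !![0, 1; 1, 0], !![0, -Complex.I; Complex.I, 0], !![1, 0; 0, -1]]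

/-- The Hadamard matrix `H = (1/√2)[[1,1],[1,−1]]`. -/
def hada : Matrix (Fin 2) (Fin 2) ℂ :=
  ((Real.sqrt 2 : ℂ))⁻¹ • !![1, 1; 1, -1]

/-- `Υ' = (H ⊗ H) Υ (H ⊗ H)`. -/
def upsilon' : Matrix (Fin 2 × Fin 2) (Fin 2 × Fin 2) ℂ :=
  (hada ⊗ₖ hada) * upsilon * (hada ⊗ₖ hada)

/-!
Conjugating an information structure by a local operator `U ⊗ V` with `V` unitary is absorbed
by conjugating the payoffs by `U` and the POVM by `V`; hence `R(Υ'; M) = R(Υ; H M H)`, and `H`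
exchanges `σ₁` and `σ₃`. On the classical state `Υ` a payoff `M` is only seen through its
diagonal: `σ₁` has none, so every strategy earns 0, while measuring in the computational basis
wins `σ₃` with certainty. A trivial-environment game is the general game with a one-dimensional
environment, so a strict inequality between two trivial-environment values refutes `Better`.
-/

theorem IsPOVM.conjTranspose_mul_mul {ι : Type} [Fintype ι] [DecidableEq ι] {k : ℕ}
    {D : Fin k → Matrix ι ι ℂ} (hD : IsPOVM D) {V : Matrix ι ι ℂ}
    (hV : V ∈ unitaryGroup ι ℂ) :
    IsPOVM fun i => Vᴴ * D i * V := by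
  refine ⟨fun i => (hD.1 i).conjTranspose_mul_mul_same V, ?_⟩
  rw [← Finset.sum_mul, ← Finset.mul_sum, hD.2, Matrix.mul_one, ← star_eq_conjTranspose]
  exact mem_unitaryGroup_iff'.mp hV

theorem IsPOVM.submatrix_equiv {ι κ : Type} [Fintype ι] [DecidableEq ι] [Fintype κ]
    [DecidableEq κ] {k : ℕ} {D : Fin k → Matrix ι ι ℂ} (hD : IsPOVM D) (e : κ ≃ ι) :
    IsPOVM fun i => (D i).submatrix e e := by
  refine ⟨fun i => (hD.1 i).submatrix e, ?_⟩
  have hsum : ∑ i, (D i).submatrix e e = (∑ i, D i).submatrix e e := by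
    ext x y
    simp only [Matrix.sum_apply, submatrix_apply]
  rw [hsum, hD.2, submatrix_one_equiv]

theorem isPOVM_one_zero {ι : Type} [Fintype ι] [DecidableEq ι] :
    IsPOVM ![(1 : Matrix ι ι ℂ), 0] :=
  ⟨Fin.forall_fin_two.mpr ⟨PosSemidef.one, PosSemidef.zero⟩, by simp [Fin.sum_univ_two]⟩

theorem isDensity_one_fin_one :
    IsDensity (1 : Matrix (Fin 1 × Fin 1) (Fin 1 × Fin 1) ℂ) :=
  ⟨PosSemidef.one, by simp [trace_one]⟩

theorem payoff_one_submatrix_prodUnique {n s : ℕ}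
    (Φ : Matrix (Fin n × Fin s) (Fin n × Fin s) ℂ) (M : Matrix (Fin n) (Fin n) ℂ)
    (D : Matrix (Fin s × Fin 1) (Fin s × Fin 1) ℂ) :
    payoff Φ 1 (M.submatrix (Equiv.prodUnique (Fin n) (Fin 1))
        (Equiv.prodUnique (Fin n) (Fin 1))) D =
      ((Φ * (M ⊗ₖ D.submatrix (Equiv.prodUnique (Fin s) (Fin 1)).symm
        (Equiv.prodUnique (Fin s) (Fin 1)).symm)).trace).re := by
  simp [payoff, trace, mul_apply, Fintype.sum_prod_type, reord, one_apply]

theorem Rval_one_eq_RvalTriv {n s k : ℕ} (Φ : Matrix (Fin n × Fin s) (Fin n × Fin s) ℂ)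
    (M : Fin k → Matrix (Fin n) (Fin n) ℂ) :
    Rval Φ (1 : Matrix (Fin 1 × Fin 1) (Fin 1 × Fin 1) ℂ)
      (fun i => (M i).submatrix (Equiv.prodUnique (Fin n) (Fin 1))
        (Equiv.prodUnique (Fin n) (Fin 1))) =
      RvalTriv Φ M := by
  unfold Rval RvalTriv
  congr 1
  ext r
  constructor
  · rintro ⟨D, hD, rfl⟩
    exact ⟨_, hD.submatrix_equiv (Equiv.prodUnique _ _).symm,
      Finset.sum_congr rfl fun i _ => payoff_one_submatrix_prodUnique Φ (M i) (D i)⟩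
  · rintro ⟨D, hD, rfl⟩
    refine ⟨_, hD.submatrix_equiv (Equiv.prodUnique _ _), Finset.sum_congr rfl fun i _ => ?_⟩
    rw [payoff_one_submatrix_prodUnique, submatrix_submatrix, Equiv.self_comp_symm,
      submatrix_id_id]

theorem not_better_of_RvalTriv_lt {n s t k : ℕ} {Φ : Matrix (Fin n × Fin s) (Fin n × Fin s) ℂ}
    {Ψ : Matrix (Fin n × Fin t) (Fin n × Fin t) ℂ} {M : Fin k → Matrix (Fin n) (Fin n) ℂ}
    (hM : ∀ i, (M i).IsHermitian) (hlt : RvalTriv Φ M < RvalTriv Ψ M) : ¬ Better Φ Ψ := by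
  intro hB
  have h := hB 1 1 k 1 _ isDensity_one_fin_one fun i =>
    (hM i).submatrix (Equiv.prodUnique (Fin n) (Fin 1))
  rw [Rval_one_eq_RvalTriv, Rval_one_eq_RvalTriv] at h
  exact hlt.not_ge h

theorem trace_kronecker_conj_mul_kronecker {m n p q : Type} [Fintype m] [Fintype n]
    [Fintype p] [Fintype q] (Φ : Matrix (m × n) (m × n) ℂ) (U : Matrix p m ℂ)
    (V : Matrix q n ℂ) (M : Matrix p p ℂ) (D : Matrix q q ℂ) :
    ((U ⊗ₖ V) * Φ * (U ⊗ₖ V)ᴴ * (M ⊗ₖ D)).trace =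
      (Φ * ((Uᴴ * M * U) ⊗ₖ (Vᴴ * D * V))).trace := by
  rw [Matrix.mul_assoc, Matrix.mul_assoc, trace_mul_comm, Matrix.mul_assoc,
    conjTranspose_kronecker, mul_kronecker_mul, mul_kronecker_mul]

theorem RvalTriv_kronecker_conj {n s k : ℕ} (Φ : Matrix (Fin n × Fin s) (Fin n × Fin s) ℂ)
    (U : Matrix (Fin n) (Fin n) ℂ) {V : Matrix (Fin s) (Fin s) ℂ}
    (hV : V ∈ unitaryGroup (Fin s) ℂ) (M : Fin k → Matrix (Fin n) (Fin n) ℂ) :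
    RvalTriv ((U ⊗ₖ V) * Φ * (U ⊗ₖ V)ᴴ) M = RvalTriv Φ fun i => Uᴴ * M i * U := by
  unfold RvalTriv
  congr 1
  ext r
  simp only [trace_kronecker_conj_mul_kronecker]
  constructor
  · rintro ⟨D, hD, rfl⟩
    exact ⟨_, hD.conjTranspose_mul_mul hV, rfl⟩
  · rintro ⟨D, hD, rfl⟩
    have hVV : Vᴴ * V = 1 := mem_unitaryGroup_iff'.mp hV
    have hD' : IsPOVM fun i => V * D i * Vᴴ := by
      simpa only [star_eq_conjTranspose, conjTranspose_conjTranspose] using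
        hD.conjTranspose_mul_mul (Unitary.star_mem hV)
    refine ⟨_, hD', Finset.sum_congr rfl fun i _ => ?_⟩
    simp only [Matrix.mul_assoc, hVV, Matrix.mul_one]
    rw [← Matrix.mul_assoc Vᴴ, hVV, Matrix.one_mul]

theorem pauli_isHermitian (j : Fin 4) : (pauli j).IsHermitian := by
  ext a b
  fin_cases j <;> fin_cases a <;> fin_cases b <;> simp [pauli]

theorem isHermitian_antipodal {n : Type} {A : Matrix n n ℂ} (hA : A.IsHermitian) :
    ∀ i, (![A, -A] i).IsHermitian :=
  Fin.forall_fin_two.mpr ⟨hA, hA.neg⟩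

theorem hada_conjTranspose : hadaᴴ = hada := by
  ext a b
  fin_cases a <;> fin_cases b <;> simp [hada, ← Complex.ofReal_inv]

theorem inv_sqrt_two_mul_self : ((Real.sqrt 2 : ℂ))⁻¹ * ((Real.sqrt 2 : ℂ))⁻¹ = 1 / 2 := by
  rw [← mul_inv, ← Complex.ofReal_mul, Real.mul_self_sqrt zero_le_two]
  norm_num

theorem hada_mul_hada : hada * hada = 1 := by
  ext a b
  fin_cases a <;> fin_cases b <;>
    simp [hada, Matrix.mul_apply, Fin.sum_univ_two, inv_sqrt_two_mul_self] <;> ring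

theorem hada_mem_unitaryGroup : hada ∈ unitaryGroup (Fin 2) ℂ := by
  rw [mem_unitaryGroup_iff', star_eq_conjTranspose, hada_conjTranspose, hada_mul_hada]

theorem hada_mul_pauli_one_mul_hada : hada * pauli 1 * hada = pauli 3 := by
  ext a b
  fin_cases a <;> fin_cases b <;>
    simp [hada, pauli, Matrix.mul_apply, Fin.sum_univ_two, inv_sqrt_two_mul_self] <;> ring

theorem hada_mul_pauli_three_mul_hada : hada * pauli 3 * hada = pauli 1 := by
  rw [← hada_mul_pauli_one_mul_hada, ← Matrix.mul_assoc, ← Matrix.mul_assoc, hada_mul_hada,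
    Matrix.one_mul, Matrix.mul_assoc, hada_mul_hada, Matrix.mul_one]

theorem mul_antipodal_mul {n : Type} [Fintype n] (U A V : Matrix n n ℂ) :
    (fun i => U * ![A, -A] i * V) = ![U * A * V, -(U * A * V)] := by
  ext i : 1
  fin_cases i <;> simp

theorem RvalTriv_upsilon' {k : ℕ} (M : Fin k → Matrix (Fin 2) (Fin 2) ℂ) :
    RvalTriv upsilon' M = RvalTriv upsilon fun i => hada * M i * hada := by
  have h := RvalTriv_kronecker_conj upsilon hada hada_mem_unitaryGroup M
  rwa [conjTranspose_kronecker, hada_conjTranspose] at h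

theorem trace_upsilon_mul_kronecker (M D : Matrix (Fin 2) (Fin 2) ℂ) :
    (upsilon * (M ⊗ₖ D)).trace = (M 0 0 * D 1 1 + M 1 1 * D 0 0) / 2 := by
  simp [upsilon, trace, mul_apply, Fintype.sum_prod_type, Fin.sum_univ_two, vecMulVec_apply,
    e01, e10, div_eq_inv_mul, mul_add]

theorem sum_trace_upsilon_pauli_one (D : Fin 2 → Matrix (Fin 2) (Fin 2) ℂ) :
    ∑ i, ((upsilon * (![pauli 1, -pauli 1] i ⊗ₖ D i)).trace).re = 0 := by
  simp [Fin.sum_univ_two, trace_upsilon_mul_kronecker, pauli]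

theorem sum_trace_upsilon_pauli_three (D : Fin 2 → Matrix (Fin 2) (Fin 2) ℂ) :
    ∑ i, ((upsilon * (![pauli 3, -pauli 3] i ⊗ₖ D i)).trace).re =
      ((D 0 1 1).re - (D 0 0 0).re - (D 1 1 1).re + (D 1 0 0).re) / 2 := by
  simp only [Nat.succ_eq_add_one, Nat.reduceAdd, pauli, Fin.isValue, cons_val, neg_of, neg_cons,
    neg_zero, neg_empty, neg_neg, trace_upsilon_mul_kronecker, Complex.div_ofNat_re,
    Complex.add_re, Complex.mul_re, Fin.sum_univ_two, cons_val_zero, of_apply, cons_val',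
    cons_val_fin_one, Complex.one_re, one_mul, Complex.one_im, zero_mul, sub_zero, cons_val_one,
    Complex.neg_re, neg_mul, Complex.neg_im]
  ring

theorem RvalTriv_upsilon_pauli_one : RvalTriv upsilon ![pauli 1, -pauli 1] = 0 := by
  refine IsGreatest.csSup_eq ⟨⟨_, isPOVM_one_zero, (sum_trace_upsilon_pauli_one _).symm⟩, ?_⟩
  rintro r ⟨D, -, rfl⟩
  exact (sum_trace_upsilon_pauli_one D).le

theorem RvalTriv_upsilon_pauli_three : RvalTriv upsilon ![pauli 3, -pauli 3] = 1 := by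
  refine IsGreatest.csSup_eq ⟨⟨![diagonal ![0, 1], diagonal ![1, 0]], ⟨?_, ?_⟩, ?_⟩, ?_⟩
  · exact Fin.forall_fin_two.mpr ⟨posSemidef_diagonal_iff.mpr (by simp [Fin.forall_fin_two]),
      posSemidef_diagonal_iff.mpr (by simp [Fin.forall_fin_two])⟩
  · ext a b
    fin_cases a <;> fin_cases b <;> simp [Fin.sum_univ_two]
  · rw [sum_trace_upsilon_pauli_three]
    norm_num
  · rintro r ⟨D, ⟨hpsd, hsum⟩, rfl⟩
    have hdiag : ∀ j, (D 0 j j).re + (D 1 j j).re = 1 := fun j => by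
      simpa [Fin.sum_univ_two] using congrArg (fun A => (A j j).re) hsum
    have hnonneg : ∀ i j, 0 ≤ (D i j j).re := fun i j =>
      (Complex.nonneg_iff.mp (hpsd i).diag_nonneg).1
    rw [sum_trace_upsilon_pauli_three]
    linarith [hdiag 0, hdiag 1, hnonneg 0 0, hnonneg 1 1]

/-- `R(Υ'; σ₁, −σ₁) = 1`, `R(Υ'; σ₃, −σ₃) = 0`, `R(Υ; σ₃, −σ₃) = 1` and
`R(Υ; σ₁, −σ₁) = 0`; consequently neither of `Υ` and `Υ'` is better than the
other. -/
theorem upsilon_incomparable :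
    RvalTriv upsilon' ![pauli 1, -pauli 1] = 1 ∧
    RvalTriv upsilon' ![pauli 3, -pauli 3] = 0 ∧
    RvalTriv upsilon ![pauli 3, -pauli 3] = 1 ∧
    RvalTriv upsilon ![pauli 1, -pauli 1] = 0 ∧
    ¬ Better upsilon upsilon' ∧ ¬ Better upsilon' upsilon := by
  have h₁ : RvalTriv upsilon' ![pauli 1, -pauli 1] = 1 := by
    rw [RvalTriv_upsilon', mul_antipodal_mul, hada_mul_pauli_one_mul_hada,
      RvalTriv_upsilon_pauli_three]
  have h₃ : RvalTriv upsilon' ![pauli 3, -pauli 3] = 0 := by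
    rw [RvalTriv_upsilon', mul_antipodal_mul, hada_mul_pauli_three_mul_hada,
      RvalTriv_upsilon_pauli_one]
  refine ⟨h₁, h₃, RvalTriv_upsilon_pauli_three, RvalTriv_upsilon_pauli_one, ?_, ?_⟩
  · refine not_better_of_RvalTriv_lt (isHermitian_antipodal (pauli_isHermitian 1)) ?_
    rw [h₁, RvalTriv_upsilon_pauli_one]
    exact zero_lt_one
  · refine not_better_of_RvalTriv_lt (isHermitian_antipodal (pauli_isHermitian 3)) ?_
    rw [h₃, RvalTriv_upsilon_pauli_three]
    exact zero_lt_one
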